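/- Let T : ℝⁿ → ℝⁿ be a homeomorphism such that T(c·x) = c·T(x) for all real c ≥ 0 and all x ∈ ℝⁿ, and such that T restricts to a bijection of the integer lattice ℤⁿ onto itself. Then for every bounded open convex set Ω ⊆ ℝⁿ containing 0, λ(T(Ω)) = λ(Ω), where λ is n-dimensional Lebesgue measure. -/

import Mathlib

/-!
Both `Ω` and `T '' Ω` are bounded open sets `U` with `closure U ⊆ r • U` for every `r > 1`;
such a set has null frontier, so its volume is the limit of `k⁻ⁿ · #(· ∩ k⁻¹ ℤⁿ)`. Since `T`
commutes with the dilation by `k⁻¹` and permutes `ℤⁿ`, it maps `Ω ∩ k⁻¹ ℤⁿ` bijectively onto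
`T '' Ω ∩ k⁻¹ ℤⁿ`, so the two counting sequences coincide and so do their limits.
-/

open MeasureTheory Set Filter Topology Bornology Module
open scoped Pointwise ENNReal

theorem Pi.coe_span_int_basisFun {ι : Type*} [Finite ι] :
    (Submodule.span ℤ (range (Pi.basisFun ℝ ι)) : Set (ι → ℝ)) =
      range fun z : ι → ℤ => fun i => (z i : ℝ) := by
  ext x
  rw [SetLike.mem_coe, Basis.mem_span_iff_repr_mem]
  simp [Pi.basisFun_repr, funext_iff, Classical.skolem, eq_comm]

theorem Convex.closure_subset_smul_of_one_lt {E : Type*} [AddCommGroup E] [Module ℝ E]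
    [TopologicalSpace E] [IsTopologicalAddGroup E] [ContinuousSMul ℝ E] {s : Set E}
    (hs : Convex ℝ s) (h0 : (0 : E) ∈ interior s) {r : ℝ} (hr : 1 < r) :
    closure s ⊆ r • s := by
  refine (hs.closure_subset_image_homothety_interior_of_one_lt h0 r hr).trans ?_
  rintro _ ⟨x, hx, rfl⟩
  exact ⟨x, interior_subset hx, by simp [AffineMap.homothety_apply]⟩

theorem measure_frontier_eq_zero_of_closure_subset_smul {E : Type*} [NormedAddCommGroup E]
    [NormedSpace ℝ E] [MeasurableSpace E] [BorelSpace E] [FiniteDimensional ℝ E]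
    (μ : Measure E) [μ.IsAddHaarMeasure] {U : Set E} (hU : IsOpen U) (hb : IsBounded U)
    (hcl : ∀ r : ℝ, 1 < r → closure U ⊆ r • U) : μ (frontier U) = 0 := by
  have hfin : μ U ≠ ∞ := hb.measure_lt_top.ne
  suffices μ (closure U) ≤ μ U by
    rwa [frontier, hU.interior_eq, measure_sdiff subset_closure hU.nullMeasurableSet hfin,
      tsub_eq_zero_iff_le]
  set f : ℝ → ℝ≥0∞ := fun r => ENNReal.ofReal |r ^ finrank ℝ E| * μ U
  have hle : ∀ r ∈ Ioi (1 : ℝ), μ (closure U) ≤ f r := fun r hr =>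
    (measure_mono (hcl r hr)).trans_eq (μ.addHaar_smul r U)
  have hf : Continuous f :=
    (ENNReal.continuous_mul_const hfin).comp
      (ENNReal.continuous_ofReal.comp ((continuous_pow _).abs))
  have hlim : Tendsto f (𝓝[>] 1) (𝓝 (μ U)) := by
    simpa [f] using hf.continuousAt.tendsto.mono_left (nhdsWithin_le_nhds (a := (1 : ℝ)))
  exact ge_of_tendsto hlim (eventually_nhdsWithin_of_forall hle)

section PosHomogeneous

variable {E : Type*} [AddCommGroup E] [Module ℝ E] {T : E → E}

theorem image_smul_of_posHomogeneous (hT : ∀ c : ℝ, 0 ≤ c → ∀ x, T (c • x) = c • T x)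
    {c : ℝ} (hc : 0 ≤ c) (s : Set E) : T '' (c • s) = c • T '' s := by
  simp only [← image_smul, image_image, hT c hc]

theorem natCard_image_inter_smul_of_posHomogeneous
    (hT : ∀ c : ℝ, 0 ≤ c → ∀ x, T (c • x) = c • T x) (hinj : Function.Injective T)
    {A : Set E} (hA : T '' A = A) {c : ℝ} (hc : 0 ≤ c) (s : Set E) :
    Nat.card ↑(T '' s ∩ c • A) = Nat.card ↑(s ∩ c • A) :=
  calc Nat.card ↑(T '' s ∩ c • A) = Nat.card ↑(T '' s ∩ T '' (c • A)) := by
        rw [image_smul_of_posHomogeneous hT hc, hA]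
    _ = Nat.card ↑(s ∩ c • A) := by
        rw [← image_inter hinj, Nat.card_image_of_injective hinj]

end PosHomogeneous

/-- A homeomorphism of `ℝⁿ` that commutes with nonnegative scaling and restricts to a
bijection of the integer lattice onto itself preserves the Lebesgue measure of every
bounded open convex set containing the origin. -/
theorem volume_image_eq_of_lattice_homeo (n : ℕ)
    (T : (Fin n → ℝ) ≃ₜ (Fin n → ℝ))
    (hhom : ∀ c : ℝ, 0 ≤ c → ∀ x, T (c • x) = c • T x)
    (hlat : T '' (Set.range fun z : Fin n → ℤ => fun i => (z i : ℝ)) =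
      Set.range fun z : Fin n → ℤ => fun i => (z i : ℝ)) :
    ∀ Ω : Set (Fin n → ℝ), IsOpen Ω → Convex ℝ Ω → Bornology.IsBounded Ω → 0 ∈ Ω →
      volume (T '' Ω) = volume Ω := by
  intro Ω hΩo hΩc hΩb hΩ0
  have hTΩo : IsOpen (T '' Ω) := T.isOpen_image.2 hΩo
  have hTΩb : IsBounded (T '' Ω) :=
    (hΩb.isCompact_closure.image T.continuous).isBounded.subset (image_mono subset_closure)
  have hcl : ∀ r : ℝ, 1 < r → closure (T '' Ω) ⊆ r • T '' Ω := fun r hr => by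
    rw [← T.image_closure, ← image_smul_of_posHomogeneous hhom (by linarith)]
    exact image_mono (hΩc.closure_subset_smul_of_one_lt (by rwa [hΩo.interior_eq]) hr)
  have hΩlim := tendsto_card_div_pow_atTop_volume Ω hΩb hΩo.measurableSet
    (hΩc.addHaar_frontier volume)
  have hTΩlim := tendsto_card_div_pow_atTop_volume (T '' Ω) hTΩb hTΩo.measurableSet
    (measure_frontier_eq_zero_of_closure_subset_smul volume hTΩo hTΩb hcl)
  rw [Pi.coe_span_int_basisFun] at hΩlim hTΩlim
  simp only [natCard_image_inter_smul_of_posHomogeneous hhom T.injective hlat, inv_nonneg,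
    Nat.cast_nonneg] at hTΩlim
  exact (ENNReal.toReal_eq_toReal_iff' hTΩb.measure_lt_top.ne hΩb.measure_lt_top.ne).1
    (tendsto_nhds_unique hTΩlim hΩlim)
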